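/- Tail estimate for the discrete Fourier transform of a Schwartz function: Let g : ℝ → ℂ be a Schwartz function; for each positive integer n let g_n : ℤ → ℂ be g_n(j) = g(j/n) and let (g_n)^_n denote its discrete Fourier transform. Then for every ε > 0 there exists N ∈ ℕ such that for all integers n > N and all integers L, L' with N < L ≤ L' ≤ n: (1/n) ∑_{j=L·n}^{L'·n - 1} |(g_n)^_n(j)| < ε and (1/n) ∑_{j=-L'·n}^{-L·n - 1} |(g_n)^_n(j)| < ε. -/

import Mathlib

open Complex Finset

/-- The discrete derivative: `Dg(j) = n·(g(j+1) - g(j))` for `-n² ≤ j ≤ n²-2`,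
and `Dg(n²-1) = 0`. -/
noncomputable def discDeriv (n : ℕ) (g : ℤ → ℂ) : ℤ → ℂ :=
  fun j => if j = (n : ℤ) ^ 2 - 1 then 0 else (n : ℂ) * (g (j + 1) - g j)

/-- The discrete shift: `Sg(j) = g(j+1)` for `-n² ≤ j ≤ n²-2`, and `Sg(n²-1) = 0`. -/
noncomputable def discShift (n : ℕ) (g : ℤ → ℂ) : ℤ → ℂ :=
  fun j => if j = (n : ℤ) ^ 2 - 1 then 0 else g (j + 1)
/-- The discrete Fourier transform `ĝ_n(l) = (1/n) ∑_{j=-n²}^{n²-1} g(j) e^{-π i j l/n²}`. -/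
noncomputable def discFT (n : ℕ) (g : ℤ → ℂ) : ℤ → ℂ :=
  fun l => (1 / (n : ℂ)) * ∑ j ∈ Finset.Icc (-(n : ℤ) ^ 2) ((n : ℤ) ^ 2 - 1),
    g j * Complex.exp (-((Real.pi : ℂ) * Complex.I * (j : ℂ) * (l : ℂ)) / (n : ℂ) ^ 2)

/-- `ψ_n(l) = n·(e^{π i l/n²} - 1)`. -/
noncomputable def psiF (n : ℕ) (l : ℤ) : ℂ :=
  (n : ℂ) * (Complex.exp ((Real.pi : ℂ) * Complex.I * (l : ℂ) / (n : ℂ) ^ 2) - 1)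

/-- `φ_n(l) = n·(e^{-π i l/n²} - 1)`. -/
noncomputable def phiF (n : ℕ) (l : ℤ) : ℂ :=
  (n : ℂ) * (Complex.exp (-((Real.pi : ℂ) * Complex.I * (l : ℂ)) / (n : ℂ) ^ 2) - 1)

/-- `C_n(l) = g(n²-1)·e^{-π i (n²-1) l/n²} - g(-n²)·e^{π i l}`. -/
noncomputable def CF (n : ℕ) (g : ℤ → ℂ) (l : ℤ) : ℂ :=
  g ((n : ℤ) ^ 2 - 1) *
      Complex.exp (-((Real.pi : ℂ) * Complex.I * ((n : ℂ) ^ 2 - 1) * (l : ℂ)) / (n : ℂ) ^ 2) -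
    g (-(n : ℤ) ^ 2) * Complex.exp ((Real.pi : ℂ) * Complex.I * (l : ℂ))

/-- `D_n(l) = -(1/n)·g(-n²)·e^{π i l/n²}·e^{π i l}`. -/
noncomputable def DF (n : ℕ) (g : ℤ → ℂ) (l : ℤ) : ℂ :=
  -(1 / (n : ℂ)) * g (-(n : ℤ) ^ 2) *
    Complex.exp ((Real.pi : ℂ) * Complex.I * (l : ℂ) / (n : ℂ) ^ 2) *
    Complex.exp ((Real.pi : ℂ) * Complex.I * (l : ℂ))

/-- `C'_n(l) = -(Dg)(-n²)·e^{π i l}`. -/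
noncomputable def CF' (n : ℕ) (g : ℤ → ℂ) (l : ℤ) : ℂ :=
  -(discDeriv n g (-(n : ℤ) ^ 2)) * Complex.exp ((Real.pi : ℂ) * Complex.I * (l : ℂ))

/-- `D'_n(l) = -(1/n)·(Dg)(-n²)·e^{π i l/n²}·e^{π i l}`. -/
noncomputable def DF' (n : ℕ) (g : ℤ → ℂ) (l : ℤ) : ℂ :=
  -(1 / (n : ℂ)) * discDeriv n g (-(n : ℤ) ^ 2) *
    Complex.exp ((Real.pi : ℂ) * Complex.I * (l : ℂ) / (n : ℂ) ^ 2) *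
    Complex.exp ((Real.pi : ℂ) * Complex.I * (l : ℂ))

/-- `E_n(l) = φ_n(l)·D_n(l) - C_n(l)`. -/
noncomputable def EF (n : ℕ) (g : ℤ → ℂ) (l : ℤ) : ℂ :=
  phiF n l * DF n g l - CF n g l

/-- `F_n(l) = ψ_n(l)·φ_n(l)·D_n(l) - ψ_n(l)·C_n(l) + φ_n(l)·D'_n(l) - C'_n(l)`. -/
noncomputable def FF (n : ℕ) (g : ℤ → ℂ) (l : ℤ) : ℂ :=
  psiF n l * phiF n l * DF n g l - psiF n l * CF n g l + phiF n l * DF' n g l - CF' n g l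

open scoped Real

/-!
Summation by parts twice gives `ψ_n(l)² ĝ_n(l) = (D²g_n)^_n(l) + F_n(l)`. For samples of a
function whose values and first two derivatives are `O(1/(1 + x²))`, the boundary term `F_n(l)`
is `O(1)` because the boundary samples sit at `|x| ≈ n`, and `(D²g_n)^_n(l)` is `O(1)` because
by the mean value theorem `|D²g_n(j)| ≲ n²/(n² + j²)`, whose sum over `j` is `O(n)`.
Jordan's inequality gives `|ψ_n(l)| ≥ 2|l|/n` for `|l| ≤ n²`, so `|ĝ_n(l)| = O(n²/l²)`, and
a tail `(1/n) ∑_{|j| ≥ Ln} n²/j²` is `O(1/L)`.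
-/

lemma sum_Icc_split {M : Type*} [AddCommMonoid M] (f : ℤ → M) {a b c : ℤ}
    (hab : a ≤ b + 1) (hbc : b ≤ c) :
    ∑ j ∈ Icc a c, f j = ∑ j ∈ Icc a b, f j + ∑ j ∈ Icc (b + 1) c, f j := by
  rw [← sum_union (disjoint_left.2 fun x hx hx' => by simp only [mem_Icc] at hx hx'; omega)]
  congr 1
  ext x
  simp only [mem_Icc, mem_union]
  omega

lemma sum_Icc_neg {M : Type*} [AddCommMonoid M] (f : ℤ → M) (a b : ℤ) :
    ∑ j ∈ Icc (-b) (-a), f j = ∑ j ∈ Icc a b, f (-j) :=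
  sum_nbij' (fun j => -j) (fun j => -j) (by simp; omega) (by simp; omega) (by simp) (by simp)
    (by simp)

lemma sum_Icc_inv_sq_le {a b : ℤ} (ha : 2 ≤ a) (hab : a - 1 ≤ b) :
    ∑ j ∈ Icc a b, ((j : ℝ) ^ 2)⁻¹ ≤ ((a : ℝ) - 1)⁻¹ := by
  -- telescoping against `1 / (j - 1) - 1 / j`
  suffices ∑ j ∈ Icc a b, ((j : ℝ) ^ 2)⁻¹ ≤ ((a : ℝ) - 1)⁻¹ - (b : ℝ)⁻¹ by
    have : (0 : ℝ) ≤ (b : ℝ)⁻¹ :=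
      inv_nonneg.2 (by exact_mod_cast (by omega : (0 : ℤ) ≤ b))
    linarith
  induction b, hab using Int.leInduction with
  | base => simp
  | succ b hb ih =>
    have hb' : (1 : ℝ) ≤ b := by exact_mod_cast (by omega : (1 : ℤ) ≤ b)
    have hstep : (((b : ℝ) + 1) ^ 2)⁻¹ ≤ (b : ℝ)⁻¹ - ((b : ℝ) + 1)⁻¹ := by
      rw [inv_sub_inv (by positivity) (by positivity), add_sub_cancel_left, one_div]
      exact inv_anti₀ (by positivity) (by nlinarith)
    rw [← insert_Icc_right_eq_Icc_add_one (by omega), sum_insert (by simp)]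
    push_cast
    linarith

lemma sum_Icc_le_of_sq_mul_le {u : ℤ → ℝ} {K : ℝ} (hK : 0 ≤ K) {a b : ℤ} (ha : 2 ≤ a)
    (hab : a - 1 ≤ b) (hu : ∀ j, a ≤ |j| → |j| ≤ b → (j : ℝ) ^ 2 * u j ≤ K) :
    ∑ j ∈ Icc a b, u j ≤ K / (a - 1) ∧ ∑ j ∈ Icc (-b) (-a), u j ≤ K / (a - 1) := by
  have hterm : ∀ j ∈ Icc a b,
      u j ≤ K * ((j : ℝ) ^ 2)⁻¹ ∧ u (-j) ≤ K * ((j : ℝ) ^ 2)⁻¹ := by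
    intro j hj
    simp only [mem_Icc] at hj
    have hj0 : (0 : ℝ) < (j : ℝ) ^ 2 := by
      have : (0 : ℝ) < j := by exact_mod_cast (by omega : (0 : ℤ) < j)
      positivity
    constructor
    · rw [← div_eq_mul_inv, le_div_iff₀ hj0, mul_comm]
      exact hu j (by rw [abs_of_pos (by omega)]; omega) (by rw [abs_of_pos (by omega)]; omega)
    · rw [← div_eq_mul_inv, le_div_iff₀ hj0, mul_comm]
      simpa using hu (-j) (by rw [abs_neg, abs_of_pos (by omega)]; omega)
        (by rw [abs_neg, abs_of_pos (by omega)]; omega)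
  have hsum : K * ∑ j ∈ Icc a b, ((j : ℝ) ^ 2)⁻¹ ≤ K / (a - 1) := by
    rw [div_eq_mul_inv]; gcongr; exact sum_Icc_inv_sq_le ha hab
  rw [mul_sum] at hsum
  rw [sum_Icc_neg]
  exact ⟨(sum_le_sum fun j hj => (hterm j hj).1).trans hsum,
    (sum_le_sum fun j hj => (hterm j hj).2).trans hsum⟩

lemma one_div_mul_sum_tails_le {u : ℤ → ℝ} {K : ℝ} (hK : 0 ≤ K) {n : ℕ}
    (hu : ∀ l, |l| ≤ (n : ℤ) ^ 2 → (l : ℝ) ^ 2 * u l ≤ K * n ^ 2) {L L' : ℤ}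
    (hL : 2 ≤ L) (hLL' : L ≤ L') (hL'n : L' ≤ n) :
    1 / (n : ℝ) * ∑ j ∈ Icc (L * n) (L' * n - 1), u j ≤ 2 * K / L ∧
      1 / (n : ℝ) * ∑ j ∈ Icc (-(L' * n)) (-(L * n) - 1), u j ≤ 2 * K / L := by
  have hLn : 2 ≤ L * n := by nlinarith
  have hLn' : (2 : ℝ) ≤ L * n := by exact_mod_cast hLn
  have hL' : (2 : ℝ) ≤ L := by exact_mod_cast hL
  have hsums := fun a b (ha : L * n ≤ a) (hab : a - 1 ≤ b) (hb : b ≤ L' * n) =>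
    sum_Icc_le_of_sq_mul_le (by positivity) (by omega) hab
      fun j _ hj => hu j (hj.trans (hb.trans (by nlinarith)))
  have hmono : ∀ a : ℤ, L * n ≤ a →
      1 / (n : ℝ) * (K * n ^ 2 / ((a : ℝ) - 1)) ≤ 2 * K / L := by
    intro a ha
    have ha' : (L : ℝ) * n ≤ a := by exact_mod_cast ha
    calc 1 / (n : ℝ) * (K * n ^ 2 / ((a : ℝ) - 1)) ≤ 1 / n * (K * n ^ 2 / (L * n - 1)) := by
          gcongr; linarith
      _ = K * n / (L * n - 1) := by field_simp
      _ ≤ 2 * K / L := by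
          rw [div_le_div_iff₀ (by linarith) (by linarith)]
          nlinarith [mul_nonneg hK (by linarith : (0 : ℝ) ≤ L * n - 2)]
  rw [show -(L * n) - 1 = -(L * n + 1) by ring]
  exact ⟨(mul_le_mul_of_nonneg_left (hsums _ _ le_rfl (by nlinarith) (by omega)).1
      (by positivity)).trans (hmono _ le_rfl),
    (mul_le_mul_of_nonneg_left (hsums _ _ (by omega) (by nlinarith) le_rfl).2
      (by positivity)).trans (hmono _ (by omega))⟩

lemma sum_Icc_sq_div_sq_add_sq_le {n : ℕ} (hn : 1 ≤ n) {m : ℤ} (hm : n ≤ m) :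
    ∑ j ∈ Icc (-m) m, (n : ℝ) ^ 2 / ((n : ℝ) ^ 2 + (j : ℝ) ^ 2) ≤ 5 * n := by
  set u : ℤ → ℝ := fun j => (n : ℝ) ^ 2 / ((n : ℝ) ^ 2 + (j : ℝ) ^ 2)
  have hn' : (1 : ℝ) ≤ n := by exact_mod_cast hn
  have hfar : ∑ j ∈ Icc ((n : ℤ) + 1) m, u j ≤ n := by
    calc ∑ j ∈ Icc ((n : ℤ) + 1) m, u j
        ≤ ∑ j ∈ Icc ((n : ℤ) + 1) m, (n : ℝ) ^ 2 * ((j : ℝ) ^ 2)⁻¹ := by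
          refine sum_le_sum fun j hj => ?_
          have : (0 : ℝ) < j := by
            exact_mod_cast (by simp only [mem_Icc] at hj; omega : (0 : ℤ) < j)
          rw [← div_eq_mul_inv]
          dsimp only [u]
          gcongr
          linarith [sq_nonneg (n : ℝ)]
      _ ≤ (n : ℝ) ^ 2 * ((n : ℝ))⁻¹ := by
          rw [← mul_sum]
          gcongr
          simpa using sum_Icc_inv_sq_le (a := (n : ℤ) + 1) (by omega) (by omega)
      _ = n := by field_simp
  have hnear : ∑ j ∈ Icc (-(n : ℤ)) n, u j ≤ 2 * n + 1 := by
    calc ∑ j ∈ Icc (-(n : ℤ)) n, u j ≤ ∑ j ∈ Icc (-(n : ℤ)) n, (1 : ℝ) :=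
          sum_le_sum fun j _ =>
            div_le_one_of_le₀ (by nlinarith [sq_nonneg (j : ℝ)]) (by positivity)
      _ = 2 * n + 1 := by
          rw [sum_const, Int.card_Icc, nsmul_eq_mul, mul_one,
            show (n : ℤ) + 1 - -n = ((2 * n + 1 : ℕ) : ℤ) by push_cast; ring,
            Int.toNat_natCast]
          push_cast; ring
  have hsymm : ∑ j ∈ Icc (-m) (-(n : ℤ) - 1), u j = ∑ j ∈ Icc ((n : ℤ) + 1) m, u j := by
    rw [show -(n : ℤ) - 1 = -((n : ℤ) + 1) by ring, sum_Icc_neg]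
    simp [u]
  rw [sum_Icc_split u (b := -(n : ℤ) - 1) (by omega) (by omega),
    sum_Icc_split u (b := (n : ℤ)) (by omega) hm, hsymm, show -(n : ℤ) - 1 + 1 = -n by ring]
  linarith

lemma psiF_eq (n : ℕ) (l : ℤ) : psiF n l = n * (exp (I * ↑(π * l / n ^ 2)) - 1) := by
  rw [psiF]; push_cast; ring_nf

lemma norm_psiF_le {n : ℕ} {l : ℤ} (hl : |l| ≤ (n : ℤ) ^ 2) : ‖psiF n l‖ ≤ 4 * n := by
  have hl' : |(l : ℝ)| / (n : ℝ) ^ 2 ≤ 1 :=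
    div_le_one_of_le₀ (by exact_mod_cast hl) (sq_nonneg _)
  rw [psiF_eq, norm_mul, Complex.norm_natCast, mul_comm 4]
  gcongr
  calc ‖exp (I * ↑(π * l / n ^ 2)) - 1‖ ≤ ‖π * l / n ^ 2‖ :=
        Real.norm_exp_I_mul_ofReal_sub_one_le
    _ = π * (|(l : ℝ)| / (n : ℝ) ^ 2) := by
        rw [Real.norm_eq_abs, abs_div, abs_mul, abs_of_pos Real.pi_pos, abs_sq]
        ring
    _ ≤ 4 := by nlinarith [Real.pi_le_four, Real.pi_pos]

lemma le_norm_psiF {n : ℕ} {l : ℤ} (hl : |l| ≤ (n : ℤ) ^ 2) :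
    2 * |(l : ℝ)| / n ≤ ‖psiF n l‖ := by
  rcases n.eq_zero_or_pos with rfl | hn
  · simp
  have hl' : |(l : ℝ)| ≤ (n : ℝ) ^ 2 := by exact_mod_cast hl
  have habs : |π * l / n ^ 2 / 2| = π * |(l : ℝ)| / (2 * (n : ℝ) ^ 2) := by
    rw [abs_div, abs_div, abs_mul, abs_of_pos Real.pi_pos,
      abs_of_pos (by positivity : (0 : ℝ) < n ^ 2), abs_two]
    ring
  have hjordan := Real.mul_abs_le_abs_sin (x := π * l / n ^ 2 / 2) (by
    rw [habs, div_le_div_iff₀ (by positivity) two_pos]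
    nlinarith [Real.pi_pos])
  rw [psiF_eq, norm_mul, Complex.norm_natCast, norm_exp_I_mul_ofReal_sub_one, norm_mul,
    Real.norm_eq_abs, Real.norm_eq_abs, abs_two]
  calc 2 * |(l : ℝ)| / n = 2 * n * (2 / π * |π * l / n ^ 2 / 2|) := by
        rw [habs]; field_simp
    _ ≤ n * (2 * |Real.sin (π * l / n ^ 2 / 2)|) := by nlinarith

lemma sum_Icc_mul_sub_shift {R : Type*} [CommRing R] (h E : ℤ → R) {a b : ℤ} (hab : a ≤ b) :
    ∑ j ∈ Icc a b, h j * (E (j - 1) - E j)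
      = h a * E (a - 1) - h b * E b + ∑ j ∈ Icc a (b - 1), (h (j + 1) - h j) * E j := by
  induction b, hab using Int.leInduction with
  | base => simp [mul_sub]
  | succ b hab ih =>
    rw [← insert_Icc_right_eq_Icc_add_one (by omega), sum_insert (by simp), ih,
      add_sub_cancel_right, ← insert_Icc_sub_one_right_eq_Icc hab, sum_insert (by simp)]
    ring

noncomputable def discFTKernel (n : ℕ) (l j : ℤ) : ℂ :=
  exp (-(π * I * j * l) / n ^ 2)

lemma discFT_eq_sum_kernel (n : ℕ) (h : ℤ → ℂ) (l : ℤ) :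
    discFT n h l
      = 1 / n * ∑ j ∈ Icc (-(n : ℤ) ^ 2) ((n : ℤ) ^ 2 - 1), h j * discFTKernel n l j :=
  rfl

lemma norm_discFTKernel (n : ℕ) (l j : ℤ) : ‖discFTKernel n l j‖ = 1 := by
  rw [discFTKernel, show -(π * I * j * l) / n ^ 2 = ((-(π * j * l / n ^ 2) : ℝ) : ℂ) * I by
    push_cast; ring]
  exact norm_exp_ofReal_mul_I _

lemma exp_mul_discFTKernel {n : ℕ} (hn : n ≠ 0) (l j : ℤ) :
    exp (π * I * l / n ^ 2) * discFTKernel n l j = discFTKernel n l (j - 1) := by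
  rw [discFTKernel, discFTKernel, ← Complex.exp_add]
  congr 1
  push_cast
  field_simp
  ring

lemma norm_discFT_le (n : ℕ) (h : ℤ → ℂ) (l : ℤ) :
    ‖discFT n h l‖
      ≤ 1 / n * ∑ j ∈ Icc (-(n : ℤ) ^ 2) ((n : ℤ) ^ 2 - 1), ‖h j‖ := by
  rw [discFT_eq_sum_kernel, norm_mul, norm_div, norm_one, Complex.norm_natCast]
  gcongr
  refine (norm_sum_le _ _).trans (le_of_eq (sum_congr rfl fun j _ => ?_))
  rw [norm_mul, norm_discFTKernel, mul_one]

lemma FF_eq (n : ℕ) (h : ℤ → ℂ) (l : ℤ) :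
    FF n h l = psiF n l * EF n h l + EF n (discDeriv n h) l := by
  have hCF : CF n (discDeriv n h) l = CF' n h l := by
    rw [CF, CF', discDeriv, if_pos rfl]
    ring
  rw [FF, EF, EF, hCF, show DF n (discDeriv n h) l = DF' n h l from rfl]
  ring

lemma one_le_natCast_sq {n : ℕ} (hn : n ≠ 0) : (1 : ℤ) ≤ (n : ℤ) ^ 2 :=
  one_le_pow₀ (by omega)

section SummationByParts

variable {n : ℕ} (hn : n ≠ 0) (h : ℤ → ℂ) (l : ℤ)
include hn

lemma EF_eq : EF n h l = h (-(n : ℤ) ^ 2) * discFTKernel n l (-(n : ℤ) ^ 2 - 1)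
    - h ((n : ℤ) ^ 2 - 1) * discFTKernel n l ((n : ℤ) ^ 2 - 1) := by
  have e₀ : (n : ℂ) * (1 / n) = 1 := mul_one_div_cancel (by exact_mod_cast hn)
  have e₁ : exp (-(π * I * l) / n ^ 2) * exp (π * I * l / n ^ 2) = 1 := by
    rw [← Complex.exp_add, neg_div, neg_add_cancel, Complex.exp_zero]
  have e₂ : exp (π * I * l / n ^ 2) * exp (π * I * l)
      = discFTKernel n l (-(n : ℤ) ^ 2 - 1) := by
    rw [discFTKernel, ← Complex.exp_add]
    congr 1
    push_cast
    field_simp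
    ring
  have e₃ : exp (-(π * I * ((n : ℂ) ^ 2 - 1) * l) / n ^ 2)
      = discFTKernel n l ((n : ℤ) ^ 2 - 1) := by
    rw [discFTKernel]; push_cast; rfl
  rw [EF, phiF, DF, CF, ← e₂, ← e₃]
  linear_combination (-(exp (-(π * I * l) / n ^ 2) - 1) * h (-(n : ℤ) ^ 2) *
      exp (π * I * l / n ^ 2) * exp (π * I * l)) * e₀
    - (h (-(n : ℤ) ^ 2) * exp (π * I * l)) * e₁

lemma discFT_discDeriv : discFT n (discDeriv n h) l
    = ∑ j ∈ Icc (-(n : ℤ) ^ 2) ((n : ℤ) ^ 2 - 2),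
        (h (j + 1) - h j) * discFTKernel n l j := by
  have hm : -(n : ℤ) ^ 2 ≤ (n : ℤ) ^ 2 - 1 := by linarith [one_le_natCast_sq hn]
  rw [discFT_eq_sum_kernel, ← insert_Icc_sub_one_right_eq_Icc hm,
    show (n : ℤ) ^ 2 - 1 - 1 = (n : ℤ) ^ 2 - 2 by ring,
    sum_insert (by simp only [mem_Icc]; omega), discDeriv, if_pos rfl, zero_mul, zero_add,
    mul_sum]
  refine sum_congr rfl fun j hj => ?_
  rw [discDeriv, if_neg (by simp only [mem_Icc] at hj; omega)]
  field_simp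

lemma psiF_mul_discFT : psiF n l * discFT n h l = discFT n (discDeriv n h) l + EF n h l := by
  have habel := sum_Icc_mul_sub_shift h (discFTKernel n l)
    (a := -(n : ℤ) ^ 2) (b := (n : ℤ) ^ 2 - 1) (by linarith [one_le_natCast_sq hn])
  rw [show (n : ℤ) ^ 2 - 1 - 1 = (n : ℤ) ^ 2 - 2 by ring] at habel
  rw [discFT_discDeriv hn, EF_eq hn]
  calc psiF n l * discFT n h l
      = ∑ j ∈ Icc (-(n : ℤ) ^ 2) ((n : ℤ) ^ 2 - 1),
          h j * (discFTKernel n l (j - 1) - discFTKernel n l j) := by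
        rw [psiF, discFT_eq_sum_kernel, ← mul_assoc, mul_sum]
        refine sum_congr rfl fun j _ => ?_
        rw [← exp_mul_discFTKernel hn]
        field_simp
    _ = _ := by rw [habel]; ring

lemma psiF_sq_mul_discFT :
    psiF n l ^ 2 * discFT n h l = discFT n (discDeriv n (discDeriv n h)) l + FF n h l := by
  rw [FF_eq, sq, mul_assoc, psiF_mul_discFT hn, mul_add, psiF_mul_discFT hn]
  ring

lemma norm_EF_le : ‖EF n h l‖ ≤ ‖h (-(n : ℤ) ^ 2)‖ + ‖h ((n : ℤ) ^ 2 - 1)‖ := by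
  rw [EF_eq hn]
  refine (norm_sub_le _ _).trans (le_of_eq ?_)
  rw [norm_mul, norm_mul, norm_discFTKernel, norm_discFTKernel, mul_one, mul_one]

lemma norm_FF_le (hl : |l| ≤ (n : ℤ) ^ 2) :
    ‖FF n h l‖ ≤ 4 * n * (‖h (-(n : ℤ) ^ 2)‖ + ‖h ((n : ℤ) ^ 2 - 1)‖)
      + ‖discDeriv n h (-(n : ℤ) ^ 2)‖ := by
  have hD := norm_EF_le hn (discDeriv n h) l
  rw [show discDeriv n h ((n : ℤ) ^ 2 - 1) = 0 from if_pos rfl, norm_zero, add_zero] at hD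
  rw [FF_eq]
  refine (norm_add_le _ _).trans (add_le_add ?_ hD)
  rw [norm_mul]
  exact mul_le_mul (norm_psiF_le hl) (norm_EF_le hn h l) (norm_nonneg _) (by positivity)

end SummationByParts

lemma norm_sub_le_of_norm_deriv_le {E : Type*} [NormedAddCommGroup E] [NormedSpace ℝ E]
    {f : ℝ → E} (hf : Differentiable ℝ f) {a b C : ℝ} (hab : a ≤ b)
    (hC : ∀ x ∈ Set.Icc a b, ‖deriv f x‖ ≤ C) : ‖f b - f a‖ ≤ C * (b - a) := by
  have := (convex_Icc a b).norm_image_sub_le_of_norm_deriv_le (fun x _ => hf x) hC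
    (Set.left_mem_Icc.2 hab) (Set.right_mem_Icc.2 hab)
  rwa [Real.norm_eq_abs, abs_of_nonneg (sub_nonneg.2 hab)] at this

noncomputable def sample (f : ℝ → ℂ) (n : ℕ) (k : ℤ) : ℂ := f (k / n)

section Sampling

variable {f : ℝ → ℂ} {n : ℕ} {j : ℤ} {B : ℝ}

lemma discDeriv_sample (hj : j ≠ (n : ℤ) ^ 2 - 1) :
    discDeriv n (sample f n) j = n * (f (j / n + 1 / n) - f (j / n)) := by
  rw [discDeriv, if_neg hj, sample, sample]
  push_cast
  rw [add_div]

lemma norm_discDeriv_sample_le (hf : Differentiable ℝ f) (hn : n ≠ 0)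
    (hj : j ≠ (n : ℤ) ^ 2 - 1)
    (hB : ∀ x ∈ Set.Icc ((j : ℝ) / n) (j / n + 1 / n), ‖deriv f x‖ ≤ B) :
    ‖discDeriv n (sample f n) j‖ ≤ B := by
  have hn' : (0 : ℝ) < n := by positivity
  have hmvt := norm_sub_le_of_norm_deriv_le hf (by linarith [one_div_pos.2 hn']) hB
  rw [add_sub_cancel_left] at hmvt
  rw [discDeriv_sample hj, norm_mul, Complex.norm_natCast]
  calc (n : ℝ) * ‖f (j / n + 1 / n) - f (j / n)‖ ≤ n * (B * (1 / n)) := by gcongr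
    _ = B := by field_simp

lemma discDeriv_discDeriv_sample (hj : j ≠ (n : ℤ) ^ 2 - 1)
    (hj' : j + 1 ≠ (n : ℤ) ^ 2 - 1) :
    discDeriv n (discDeriv n (sample f n)) j
      = discDeriv n (sample (fun x => n * (f (x + 1 / n) - f x)) n) j := by
  rw [discDeriv, if_neg hj, discDeriv_sample hj, discDeriv_sample hj', discDeriv, if_neg hj]
  simp only [sample]

lemma norm_discDeriv_discDeriv_sample_le (hf : Differentiable ℝ f)
    (hf' : Differentiable ℝ (deriv f)) (hn : n ≠ 0) (hj : j ≠ (n : ℤ) ^ 2 - 1)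
    (hj' : j + 1 ≠ (n : ℤ) ^ 2 - 1)
    (hB : ∀ x ∈ Set.Icc ((j : ℝ) / n) (j / n + 2 / n), ‖deriv (deriv f) x‖ ≤ B) :
    ‖discDeriv n (discDeriv n (sample f n)) j‖ ≤ B := by
  have hn' : (0 : ℝ) < n := by positivity
  have hG : ∀ x, HasDerivAt (fun x => (n : ℂ) * (f (x + 1 / n) - f x))
      (n * (deriv f (x + 1 / n) - deriv f x)) x := fun x =>
    (((hf _).hasDerivAt.comp_add_const x (1 / n)).sub (hf x).hasDerivAt).const_mul (n : ℂ)
  rw [discDeriv_discDeriv_sample hj hj']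
  refine norm_discDeriv_sample_le (fun x => (hG x).differentiableAt) hn hj fun x hx => ?_
  have hmvt := norm_sub_le_of_norm_deriv_le hf' (le_add_of_nonneg_right (one_div_pos.2 hn').le)
    fun y hy => hB y ⟨hx.1.trans hy.1, by
      have h2 : (2 : ℝ) / n = 1 / n + 1 / n := by ring
      linarith [hy.2, hx.2]⟩
  rw [add_sub_cancel_left] at hmvt
  rw [(hG x).deriv, norm_mul, Complex.norm_natCast]
  calc (n : ℝ) * ‖deriv f (x + 1 / n) - deriv f x‖ ≤ n * (B * (1 / n)) := by gcongr
    _ = B := by field_simp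

end Sampling

lemma sq_add_sq_le_of_mem_Icc {n : ℕ} (hn : 2 ≤ n) {j : ℤ} {y : ℝ}
    (hy : y ∈ Set.Icc ((j : ℝ) / n) (j / n + 2 / n)) :
    (n : ℝ) ^ 2 + (j : ℝ) ^ 2 ≤ 3 * n ^ 2 * (1 + y ^ 2) := by
  have hn' : (2 : ℝ) ≤ n := by exact_mod_cast hn
  have h₁ : (j : ℝ) ≤ n * y := by
    have := hy.1; rw [div_le_iff₀ (by positivity)] at this; linarith
  have h₂ : n * y ≤ (j : ℝ) + 2 := by
    have := hy.2; rw [← add_div, le_div_iff₀ (by positivity)] at this; linarith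
  nlinarith [sq_nonneg (2 * (n * y) - j)]

section Decay

variable {f : ℝ → ℂ} {C : ℝ} {n : ℕ}

lemma nonneg_of_norm_le_div_one_add_sq (h₀ : ∀ x, ‖f x‖ ≤ C / (1 + x ^ 2)) : 0 ≤ C := by
  simpa using (norm_nonneg _).trans (h₀ 0)

lemma norm_le_of_le_two_mul_abs (h₀ : ∀ x, ‖f x‖ ≤ C / (1 + x ^ 2)) (hn : n ≠ 0)
    {x : ℝ} (hx : (n : ℝ) ≤ 2 * |x|) : ‖f x‖ ≤ 4 * C / n ^ 2 := by
  have hC := nonneg_of_norm_le_div_one_add_sq h₀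
  refine (h₀ x).trans ?_
  rw [div_le_div_iff₀ (by positivity) (by positivity)]
  have hsq : (n : ℝ) ^ 2 ≤ 4 * x ^ 2 := by nlinarith [sq_abs x]
  nlinarith [mul_le_mul_of_nonneg_left hsq hC]

lemma norm_discDeriv_sample_le_of_far (hf : Differentiable ℝ f)
    (h₁ : ∀ x, ‖deriv f x‖ ≤ C / (1 + x ^ 2)) (hn : n ≠ 0) {j : ℤ}
    (hj : j ≠ (n : ℤ) ^ 2 - 1)
    (hfar : ∀ x ∈ Set.Icc ((j : ℝ) / n) (j / n + 1 / n), (n : ℝ) ≤ 2 * |x|) :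
    ‖discDeriv n (sample f n) j‖ ≤ 4 * C / n ^ 2 :=
  norm_discDeriv_sample_le hf hn hj fun x hx => norm_le_of_le_two_mul_abs h₁ hn (hfar x hx)

lemma norm_discDeriv_discDeriv_sample_le_of_decay (hf : Differentiable ℝ f)
    (hf' : Differentiable ℝ (deriv f)) (h₂ : ∀ x, ‖deriv (deriv f) x‖ ≤ C / (1 + x ^ 2))
    (hn : 2 ≤ n) {j : ℤ} (hj : j ≤ (n : ℤ) ^ 2 - 3) :
    ‖discDeriv n (discDeriv n (sample f n)) j‖ ≤ 3 * C * (n ^ 2 / (n ^ 2 + j ^ 2)) := by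
  have hC := nonneg_of_norm_le_div_one_add_sq h₂
  refine norm_discDeriv_discDeriv_sample_le hf hf' (by omega) (by omega) (by omega) fun x hx => ?_
  refine (h₂ x).trans ?_
  rw [mul_div_assoc', div_le_div_iff₀ (by positivity) (by positivity)]
  nlinarith [sq_add_sq_le_of_mem_Icc hn hx]

lemma norm_FF_sample_le (hf : Differentiable ℝ f) (h₀ : ∀ x, ‖f x‖ ≤ C / (1 + x ^ 2))
    (h₁ : ∀ x, ‖deriv f x‖ ≤ C / (1 + x ^ 2)) (hn : 2 ≤ n) {l : ℤ}
    (hl : |l| ≤ (n : ℤ) ^ 2) : ‖FF n (sample f n) l‖ ≤ 17 * C := by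
  have hC := nonneg_of_norm_le_div_one_add_sq h₀
  have hn' : (2 : ℝ) ≤ n := by exact_mod_cast hn
  have hbot : ‖sample f n (-(n : ℤ) ^ 2)‖ ≤ 4 * C / n ^ 2 := by
    refine norm_le_of_le_two_mul_abs h₀ (by omega) ?_
    rw [show (((-(n : ℤ) ^ 2 : ℤ)) : ℝ) / n = -n by push_cast; field_simp, abs_neg,
      Nat.abs_cast]
    linarith
  have htop : ‖sample f n ((n : ℤ) ^ 2 - 1)‖ ≤ 4 * C / n ^ 2 := by
    refine norm_le_of_le_two_mul_abs h₀ (by omega) ?_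
    refine le_trans ?_ (mul_le_mul_of_nonneg_left (le_abs_self _) zero_le_two)
    rw [mul_div_assoc', le_div_iff₀ (by positivity)]
    push_cast
    nlinarith
  have hdiff : ‖discDeriv n (sample f n) (-(n : ℤ) ^ 2)‖ ≤ 4 * C / n ^ 2 := by
    refine norm_discDeriv_sample_le_of_far hf h₁ (by omega) (by omega) fun x hx => ?_
    have := hx.2
    rw [show (((-(n : ℤ) ^ 2 : ℤ)) : ℝ) / n = -n by push_cast; field_simp] at this
    have : 1 / (n : ℝ) ≤ 1 / 2 := by gcongr
    linarith [neg_le_abs x]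
  refine (norm_FF_le (by omega) _ l hl).trans ?_
  calc 4 * n * (‖sample f n (-(n : ℤ) ^ 2)‖ + ‖sample f n ((n : ℤ) ^ 2 - 1)‖)
        + ‖discDeriv n (sample f n) (-(n : ℤ) ^ 2)‖
      ≤ 4 * n * (4 * C / n ^ 2 + 4 * C / n ^ 2) + 4 * C / n ^ 2 := by gcongr
    _ = 32 * C / n + 4 * C / n ^ 2 := by field_simp; ring
    _ ≤ 16 * C + C := by
        gcongr
        · rw [div_le_iff₀ (by positivity)]; nlinarith
        · rw [div_le_iff₀ (by positivity)]
          nlinarith [mul_le_mul_of_nonneg_left (by nlinarith : (4 : ℝ) ≤ n ^ 2) hC]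
    _ = 17 * C := by ring

lemma sum_norm_discDeriv_discDeriv_sample_le (hf : Differentiable ℝ f)
    (hf' : Differentiable ℝ (deriv f)) (h₁ : ∀ x, ‖deriv f x‖ ≤ C / (1 + x ^ 2))
    (h₂ : ∀ x, ‖deriv (deriv f) x‖ ≤ C / (1 + x ^ 2)) (hn : 2 ≤ n) :
    ∑ j ∈ Icc (-(n : ℤ) ^ 2) ((n : ℤ) ^ 2 - 1),
        ‖discDeriv n (discDeriv n (sample f n)) j‖ ≤ 15 * C * n + 4 * C / n := by
  have hC := nonneg_of_norm_le_div_one_add_sq h₁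
  have hn' : (2 : ℝ) ≤ n := by exact_mod_cast hn
  have hm : (4 : ℤ) ≤ (n : ℤ) ^ 2 := by nlinarith
  have hinner : ∑ j ∈ Icc (-(n : ℤ) ^ 2) ((n : ℤ) ^ 2 - 3),
      ‖discDeriv n (discDeriv n (sample f n)) j‖ ≤ 15 * C * n := by
    calc _ ≤ ∑ j ∈ Icc (-(n : ℤ) ^ 2) ((n : ℤ) ^ 2 - 3),
          3 * C * (n ^ 2 / (n ^ 2 + j ^ 2)) :=
          sum_le_sum fun j hj =>
            norm_discDeriv_discDeriv_sample_le_of_decay hf hf' h₂ hn (mem_Icc.1 hj).2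
      _ ≤ ∑ j ∈ Icc (-(n : ℤ) ^ 2) ((n : ℤ) ^ 2), 3 * C * (n ^ 2 / (n ^ 2 + j ^ 2)) :=
          sum_le_sum_of_subset_of_nonneg (Icc_subset_Icc le_rfl (by omega))
            fun _ _ _ => by positivity
      _ ≤ 3 * C * (5 * n) := by
          rw [← mul_sum]
          gcongr
          exact sum_Icc_sq_div_sq_add_sq_le (by omega) (by nlinarith)
      _ = 15 * C * n := by ring
  have hlast : ‖discDeriv n (discDeriv n (sample f n)) ((n : ℤ) ^ 2 - 2)‖ ≤ 4 * C / n := by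
    rw [discDeriv, if_neg (by omega), show (n : ℤ) ^ 2 - 2 + 1 = (n : ℤ) ^ 2 - 1 by ring,
      discDeriv, if_pos rfl, zero_sub, norm_mul, norm_neg, Complex.norm_natCast]
    have := norm_discDeriv_sample_le_of_far hf h₁ (n := n) (j := (n : ℤ) ^ 2 - 2) (by omega)
      (by omega) fun x hx => by
        have := hx.1
        rw [div_le_iff₀ (by positivity)] at this
        push_cast at this
        nlinarith [le_abs_self x]
    calc (n : ℝ) * ‖discDeriv n (sample f n) ((n : ℤ) ^ 2 - 2)‖
        ≤ n * (4 * C / n ^ 2) := by gcongr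
      _ = 4 * C / n := by field_simp
  rw [← insert_Icc_sub_one_right_eq_Icc (by omega), sum_insert (by simp),
    show (n : ℤ) ^ 2 - 1 - 1 = (n : ℤ) ^ 2 - 2 by ring,
    ← insert_Icc_sub_one_right_eq_Icc (by omega), sum_insert (by simp),
    show (n : ℤ) ^ 2 - 2 - 1 = (n : ℤ) ^ 2 - 3 by ring, discDeriv, if_pos rfl, norm_zero,
    zero_add]
  linarith

lemma norm_discFT_discDeriv_discDeriv_sample_le (hf : Differentiable ℝ f)
    (hf' : Differentiable ℝ (deriv f)) (h₁ : ∀ x, ‖deriv f x‖ ≤ C / (1 + x ^ 2))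
    (h₂ : ∀ x, ‖deriv (deriv f) x‖ ≤ C / (1 + x ^ 2)) (hn : 2 ≤ n) (l : ℤ) :
    ‖discFT n (discDeriv n (discDeriv n (sample f n))) l‖ ≤ 16 * C := by
  have hC := nonneg_of_norm_le_div_one_add_sq h₁
  have hn' : (2 : ℝ) ≤ n := by exact_mod_cast hn
  calc _ ≤ 1 / n * (15 * C * n + 4 * C / n) := (norm_discFT_le _ _ l).trans (by
        gcongr; exact sum_norm_discDeriv_discDeriv_sample_le hf hf' h₁ h₂ hn)
    _ = 15 * C + 4 * C / n ^ 2 := by field_simp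
    _ ≤ 16 * C := by
        have : 4 * C / n ^ 2 ≤ C := by
          rw [div_le_iff₀ (by positivity)]
          nlinarith [mul_le_mul_of_nonneg_left (by nlinarith : (4 : ℝ) ≤ n ^ 2) hC]
        linarith

lemma norm_discFT_sample_le (hf : Differentiable ℝ f) (hf' : Differentiable ℝ (deriv f))
    (h₀ : ∀ x, ‖f x‖ ≤ C / (1 + x ^ 2))
    (h₁ : ∀ x, ‖deriv f x‖ ≤ C / (1 + x ^ 2))
    (h₂ : ∀ x, ‖deriv (deriv f) x‖ ≤ C / (1 + x ^ 2)) (hn : 2 ≤ n) {l : ℤ}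
    (hl : |l| ≤ (n : ℤ) ^ 2) :
    (l : ℝ) ^ 2 * ‖discFT n (sample f n) l‖ ≤ 9 * C * n ^ 2 := by
  have hC := nonneg_of_norm_le_div_one_add_sq h₀
  have hn' : (0 : ℝ) < n := by positivity
  have hupper : ‖psiF n l‖ ^ 2 * ‖discFT n (sample f n) l‖ ≤ 33 * C := by
    rw [← norm_pow, ← norm_mul, psiF_sq_mul_discFT (by omega)]
    refine (norm_add_le _ _).trans ?_
    linarith [norm_discFT_discDeriv_discDeriv_sample_le hf hf' h₁ h₂ hn l,
      norm_FF_sample_le hf h₀ h₁ hn hl]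
  have hlower : (2 * |(l : ℝ)| / n) ^ 2 ≤ ‖psiF n l‖ ^ 2 :=
    pow_le_pow_left₀ (by positivity) (le_norm_psiF hl) 2
  have hsq : (2 * |(l : ℝ)| / n) ^ 2 = 4 * (l : ℝ) ^ 2 / n ^ 2 := by
    rw [div_pow, mul_pow, sq_abs]; norm_num
  have h := (mul_le_mul_of_nonneg_right hlower (norm_nonneg _)).trans hupper
  rw [hsq, div_mul_eq_mul_div, div_le_iff₀ (by positivity)] at h
  nlinarith [norm_nonneg (discFT n (sample f n) l), mul_nonneg hC hn'.le]

end Decay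

lemma SchwartzMap.exists_norm_iteratedDeriv_le_div_one_add_sq {F : Type*}
    [NormedAddCommGroup F] [NormedSpace ℝ F] (g : SchwartzMap ℝ F) (N : ℕ) :
    ∃ C, ∀ k ≤ N, ∀ x : ℝ, ‖iteratedDeriv k g x‖ ≤ C / (1 + x ^ 2) := by
  refine ⟨2 ^ 2 * (Iic (2, N)).sup (fun m => SchwartzMap.seminorm ℝ m.1 m.2) g,
    fun k hk x => ?_⟩
  have := one_add_le_sup_seminorm_apply (𝕜 := ℝ) (m := (2, N)) le_rfl hk g x
  rw [norm_iteratedFDeriv_eq_norm_iteratedDeriv, Real.norm_eq_abs] at this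
  have hx : 1 + x ^ 2 ≤ (1 + |x|) ^ 2 := by nlinarith [abs_nonneg x, sq_abs x]
  rw [le_div_iff₀ (by positivity), mul_comm]
  exact (mul_le_mul_of_nonneg_right hx (norm_nonneg _)).trans this

lemma SchwartzMap.exists_sq_mul_norm_discFT_sample_le (g : SchwartzMap ℝ ℂ) :
    ∃ K, 0 ≤ K ∧ ∀ n : ℕ, 2 ≤ n → ∀ l : ℤ, |l| ≤ (n : ℤ) ^ 2 →
      (l : ℝ) ^ 2 * ‖discFT n (sample g n) l‖ ≤ K * n ^ 2 := by
  obtain ⟨C, hC⟩ := g.exists_norm_iteratedDeriv_le_div_one_add_sq 2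
  have h₀ : ∀ x, ‖g x‖ ≤ C / (1 + x ^ 2) := by simpa using hC 0 (by norm_num)
  have h₁ : ∀ x, ‖deriv g x‖ ≤ C / (1 + x ^ 2) := by simpa using hC 1 (by norm_num)
  have h₂ : ∀ x, ‖deriv (deriv g) x‖ ≤ C / (1 + x ^ 2) := by
    simpa [iteratedDeriv_succ] using hC 2 le_rfl
  exact ⟨9 * C, by linarith [nonneg_of_norm_le_div_one_add_sq h₀], fun n hn l hl =>
    norm_discFT_sample_le g.differentiable (SchwartzMap.derivCLM ℝ ℂ g).differentiable
      h₀ h₁ h₂ hn hl⟩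

/-- **Tail estimate for the discrete Fourier transform of a Schwartz function.**
For every `ε > 0` there is `N` such that for all `n > N` and integers `N < L ≤ L' ≤ n`,
both tails `(1/n) ∑_{j=Ln}^{L'n-1} |(g_n)^_n(j)|` and
`(1/n) ∑_{j=-L'n}^{-Ln-1} |(g_n)^_n(j)|` are `< ε`, where `g_n(j) = g(j/n)`. -/
theorem discFT_tail_estimate (g : SchwartzMap ℝ ℂ) :
    ∀ ε : ℝ, 0 < ε → ∃ N : ℕ, ∀ n : ℕ, N < n → ∀ L L' : ℤ,
      (N : ℤ) < L → L ≤ L' → L' ≤ (n : ℤ) →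
      (1 / (n : ℝ)) * ∑ j ∈ Finset.Icc (L * n) (L' * n - 1),
          ‖discFT n (fun k : ℤ => g ((k : ℝ) / (n : ℝ))) j‖ < ε ∧
      (1 / (n : ℝ)) * ∑ j ∈ Finset.Icc (-(L' * n)) (-(L * n) - 1),
          ‖discFT n (fun k : ℤ => g ((k : ℝ) / (n : ℝ))) j‖ < ε := by
  obtain ⟨K, hK, hdecay⟩ := g.exists_sq_mul_norm_discFT_sample_le
  intro ε hε
  obtain ⟨N, hN⟩ := exists_nat_gt (2 * K / ε)
  refine ⟨N + 1, fun n hn L L' hL hLL' hL'n => ?_⟩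
  have hsmall : 2 * K / L < ε := by
    have hL' : (N : ℝ) + 1 < L := by exact_mod_cast hL
    rw [div_lt_iff₀ hε] at hN
    rw [div_lt_iff₀ (by linarith [N.cast_nonneg (α := ℝ)])]
    nlinarith
  obtain ⟨hpos, hneg⟩ := one_div_mul_sum_tails_le hK (hdecay n (by omega)) (by omega) hLL' hL'n
  exact ⟨hpos.trans_lt hsmall, hneg.trans_lt hsmall⟩
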